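/- Assume there exists a non-negative measurable function g : [0,∞) → [0,∞) such that ρ₂(t) ≤ g(s) ρ₂(t−s) for all 0 ≤ s ≤ t < ∞, and let (R(t))_{t>0} be a strongly continuous family of bounded linear operators on X satisfying ∫_0^∞ (1+g(s)) ‖R(s)‖ ds < ∞. Let f ∈ PAP_0([0,∞), X, ρ₁, ρ₂) and define F(t) := ∫_0^t R(t−s) f(s) ds for t ≥ 0. Then F ∈ PAP_0([0,∞), X, ρ₁, ρ₂). -/

import Mathlib

/-!
Extend `f` by zero to `f₀ := 1_{[0,∞)} f`, so that `F(t) = ∫_0^∞ R(u) f₀(t - u) du` for `t ≥ 0`.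
Banach–Steinhaus makes `R` locally bounded, so the integrand is measurable and dominated
convergence (with dominant `C ‖R(u)‖`) gives continuity of `F`; the same dominant bounds `F`.
For the mean, `ρ₂(t) ≤ g(u) ρ₂(t - u)` gives the pointwise convolution bound
`‖F(t)‖ ρ₂(t) ≤ ∫_0^∞ g(u) ‖R(u)‖ · ‖f₀(t - u)‖ ρ₂(t - u) du`, and Tonelli turns it into
`∫_0^T ‖F‖ ρ₂ ≤ (∫_0^∞ g ‖R‖) ∫_0^T ‖f‖ ρ₂`; dividing by `∫_0^T ρ₁` finishes the proof.
-/

open MeasureTheory Filter Set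

/-- A weight on the half-line of class `U_{∞,p}`: locally integrable, a.e. positive on
`[0,∞)`, and `∫_0^T ρ(t) dt → ∞` as `T → +∞`. -/
def IsWeightUInftyHalf (ρ : ℝ → ℝ) : Prop :=
  (∀ a b : ℝ, IntervalIntegrable ρ MeasureTheory.volume a b) ∧
  (∀ᵐ t : ℝ ∂(MeasureTheory.volume.restrict (Set.Ici (0:ℝ))), 0 < ρ t) ∧
  Filter.Tendsto (fun T : ℝ => ∫ t in (0:ℝ)..T, ρ t) Filter.atTop Filter.atTop

/-- Membership in `PAP_0([0,∞), X, ρ₁, ρ₂)`: bounded continuous functions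
`f : [0,∞) → X` with `lim_{T→+∞} (1/∫_0^T ρ₁) ∫_0^T ‖f(t)‖ ρ₂(t) dt = 0`. -/
def MemPAP0Half {X : Type*} [NormedAddCommGroup X] (ρ₁ ρ₂ : ℝ → ℝ) (f : ℝ → X) : Prop :=
  ContinuousOn f (Set.Ici (0:ℝ)) ∧ (∃ C : ℝ, ∀ t ≥ (0:ℝ), ‖f t‖ ≤ C) ∧
  Filter.Tendsto (fun T : ℝ =>
      (1 / ∫ t in (0:ℝ)..T, ρ₁ t) * ∫ t in (0:ℝ)..T, ‖f t‖ * ρ₂ t)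
    Filter.atTop (nhds 0)

open Topology
open scoped ENNReal

theorem ContinuousOn.clm_apply_of_strongly_continuousOn {𝕜 E F α : Type*}
    [NontriviallyNormedField 𝕜] [NormedAddCommGroup E] [NormedSpace 𝕜 E] [CompleteSpace E]
    [NormedAddCommGroup F] [NormedSpace 𝕜 F] [TopologicalSpace α] [LocallyCompactSpace α]
    {R : α → E →L[𝕜] F} {φ : α → E} {U s : Set α} (hU : IsOpen U)
    (hR : ∀ x, ContinuousOn (fun t ↦ R t x) U) (hφ : ContinuousOn φ s) (hsU : s ⊆ U) :
    ContinuousOn (fun t ↦ R t (φ t)) s := by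
  intro t₀ ht₀
  obtain ⟨K, hK, hKU, hKc⟩ := local_compact_nhds (hU.mem_nhds (hsU ht₀))
  obtain ⟨C, hC⟩ : ∃ C, ∀ t : K, ‖R t‖ ≤ C := banach_steinhaus fun x ↦
    let ⟨C, hC⟩ := hKc.exists_bound_of_continuousOn ((hR x).mono hKU); ⟨C, fun t ↦ hC t t.2⟩
  have hfixed : Tendsto (fun t ↦ R t (φ t₀)) (𝓝[s] t₀) (𝓝 (R t₀ (φ t₀))) :=
    ((hR _ t₀ (hsU ht₀)).continuousAt (hU.mem_nhds (hsU ht₀))).tendsto.mono_left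
      nhdsWithin_le_nhds
  have hvar : Tendsto (fun t ↦ R t (φ t - φ t₀)) (𝓝[s] t₀) (𝓝 0) := by
    refine squeeze_zero_norm' ?_ (by simpa using ((hφ t₀ ht₀).sub_const (φ t₀)).norm.const_mul C)
    filter_upwards [nhdsWithin_le_nhds hK] with t ht
    exact (R t).le_of_opNorm_le (hC ⟨t, ht⟩) _
  simpa [ContinuousWithinAt] using hfixed.add hvar

theorem Integrable.and_mul_of_one_add_mul {α : Type*} [MeasurableSpace α] {μ : Measure α}
    {g r : α → ℝ} (h : Integrable (fun x ↦ (1 + g x) * r x) μ) (hg : AEMeasurable g μ)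
    (hg0 : ∀ᵐ x ∂μ, 0 ≤ g x) (hr0 : ∀ x, 0 ≤ r x) :
    Integrable r μ ∧ Integrable (fun x ↦ g x * r x) μ := by
  have hr_meas : AEStronglyMeasurable r μ := by
    have hdiv := h.aemeasurable.div ((aemeasurable_const (b := (1 : ℝ))).add hg)
    refine hdiv.aestronglyMeasurable.congr ?_
    filter_upwards [hg0] with x hx
    exact mul_div_cancel_left₀ _ (by positivity)
  have hr : Integrable r μ := h.mono' hr_meas <| by
    filter_upwards [hg0] with x hx
    rw [Real.norm_eq_abs, abs_of_nonneg (hr0 x)]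
    nlinarith [hr0 x]
  exact ⟨hr, (h.sub hr).congr (Eventually.of_forall fun x ↦ by simp only [Pi.sub_apply]; ring)⟩

theorem integral_le_toReal_lintegral_ofReal {α : Type*} [MeasurableSpace α] {μ : Measure α}
    (h : α → ℝ) : ∫ x, h x ∂μ ≤ (∫⁻ x, ENNReal.ofReal (h x) ∂μ).toReal := by
  by_cases hh : Integrable h μ
  · rw [integral_eq_lintegral_pos_part_sub_lintegral_neg_part hh]
    exact sub_le_self _ ENNReal.toReal_nonneg
  · rw [integral_undef hh]
    exact ENNReal.toReal_nonneg

theorem lintegral_lintegral_mul_sub {G : Type*} [MeasurableSpace G] [AddGroup G]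
    [MeasurableAdd₂ G] [MeasurableNeg G] {μ : Measure G} [SFinite μ] [μ.IsAddRightInvariant]
    {a b : G → ℝ≥0∞} (ha : AEMeasurable a μ) (hb : AEMeasurable b μ) :
    ∫⁻ x, ∫⁻ y, a y * b (x - y) ∂μ ∂μ = (∫⁻ y, a y ∂μ) * ∫⁻ x, b x ∂μ := by
  rw [lintegral_lintegral_swap (ha.comp_snd.mul
    (hb.comp_quasiMeasurePreserving (quasiMeasurePreserving_sub_of_right_invariant μ μ)))]
  calc ∫⁻ y, ∫⁻ x, a y * b (x - y) ∂μ ∂μ = ∫⁻ y, a y * ∫⁻ x, b (x - y) ∂μ ∂μ := by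
        refine lintegral_congr fun y ↦ lintegral_const_mul'' _ ?_
        exact hb.comp_quasiMeasurePreserving
          (measurePreserving_sub_right μ y).quasiMeasurePreserving
    _ = (∫⁻ y, a y ∂μ) * ∫⁻ x, b x ∂μ := by
        simp only [lintegral_sub_right_eq_self]
        exact lintegral_mul_const'' _ ha

theorem setLIntegral_Icc_lintegral_Ioi_mul_sub_le {a b : ℝ → ℝ≥0∞} {T : ℝ}
    (ha : AEMeasurable a (volume.restrict (Ioi 0)))
    (hb : AEMeasurable b (volume.restrict (Icc 0 T))) (hb0 : ∀ x < 0, b x = 0) :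
    ∫⁻ t in Icc 0 T, ∫⁻ u in Ioi 0, a u * b (t - u) ≤
      (∫⁻ u in Ioi 0, a u) * ∫⁻ v in Icc 0 T, b v := by
  have hle : ∀ t ∈ Icc 0 T, ∀ u > 0, b (t - u) ≤ (Icc 0 T).indicator b (t - u) := by
    intro t ht u hu
    rcases lt_or_ge (t - u) 0 with hneg | hnonneg
    · simp [hb0 _ hneg]
    · rw [indicator_of_mem (show t - u ∈ Icc 0 T from ⟨hnonneg, by linarith [ht.2]⟩)]
  calc ∫⁻ t in Icc 0 T, ∫⁻ u in Ioi 0, a u * b (t - u)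
      ≤ ∫⁻ t in Icc 0 T, ∫⁻ u, (Ioi 0).indicator a u * (Icc 0 T).indicator b (t - u) := by
        refine setLIntegral_mono' measurableSet_Icc fun t ht ↦ ?_
        rw [← lintegral_indicator measurableSet_Ioi]
        refine lintegral_mono fun u ↦ ?_
        by_cases hu : u ∈ Ioi (0 : ℝ)
        · simp only [indicator_of_mem hu]
          exact mul_le_mul_right (hle t ht u hu) _
        · simp [hu]
    _ ≤ ∫⁻ t, ∫⁻ u, (Ioi 0).indicator a u * (Icc 0 T).indicator b (t - u) :=
        setLIntegral_le_lintegral _ _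
    _ = (∫⁻ u in Ioi 0, a u) * ∫⁻ v in Icc 0 T, b v := by
        rw [lintegral_lintegral_mul_sub ((aemeasurable_indicator_iff measurableSet_Ioi).2 ha)
          ((aemeasurable_indicator_iff measurableSet_Icc).2 hb),
          lintegral_indicator measurableSet_Ioi, lintegral_indicator measurableSet_Icc]

theorem norm_indicator_Ici_le {E : Type*} [NormedAddCommGroup E] {f : ℝ → E} {a C : ℝ}
    (hfC : ∀ x ≥ a, ‖f x‖ ≤ C) (x : ℝ) : ‖(Ici a).indicator f x‖ ≤ C := by
  by_cases hx : x ∈ Ici a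
  · simpa [indicator_of_mem hx] using hfC x hx
  · simpa [indicator_of_notMem hx] using (norm_nonneg _).trans (hfC a le_rfl)

section CausalConvolution

variable {𝕜 E F : Type*} [NontriviallyNormedField 𝕜] [NormedAddCommGroup E] [NormedSpace 𝕜 E]
  [NormedAddCommGroup F] [NormedSpace 𝕜 F] {R : ℝ → E →L[𝕜] F} {f : ℝ → E}

theorem aestronglyMeasurable_clm_apply_sub [CompleteSpace E]
    (hR : ∀ x, ContinuousOn (fun t ↦ R t x) (Ioi 0)) (hfc : ∀ x ≠ 0, ContinuousAt f x) (t : ℝ) :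
    AEStronglyMeasurable (fun u ↦ R u (f (t - u))) (volume.restrict (Ioi 0)) := by
  have hcont : ContinuousOn (fun u ↦ R u (f (t - u))) (Ioi 0 \ {t}) :=
    ContinuousOn.clm_apply_of_strongly_continuousOn isOpen_Ioi hR
      (fun u hu ↦ ((hfc _ (sub_ne_zero.2 (Ne.symm hu.2))).comp
        (continuous_sub_left t).continuousAt).continuousWithinAt) sdiff_subset
  rw [← Measure.restrict_congr_set (sdiff_null_ae_eq_self (measure_singleton t))]
  exact hcont.aestronglyMeasurable (measurableSet_Ioi.diff (measurableSet_singleton t))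

variable [NormedSpace ℝ F]

noncomputable def causalConvolution (R : ℝ → E →L[𝕜] F) (f : ℝ → E) (t : ℝ) : F :=
  ∫ u in Ioi 0, R u (f (t - u))

theorem intervalIntegral_eq_causalConvolution_indicator (R : ℝ → E →L[𝕜] F) (f : ℝ → E)
    {t : ℝ} (ht : 0 ≤ t) :
    ∫ s in (0 : ℝ)..t, R (t - s) (f s) = causalConvolution R ((Ici 0).indicator f) t := by
  have hind : ∀ u, R u ((Ici 0).indicator f (t - u)) =
      (Iic t).indicator (fun u ↦ R u (f (t - u))) u := by
    intro u
    by_cases hu : u ≤ t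
    · rw [indicator_of_mem (mem_Ici.2 (sub_nonneg.2 hu)), indicator_of_mem (mem_Iic.2 hu)]
    · rw [indicator_of_notMem (by simpa using hu), indicator_of_notMem (by simpa using hu),
        map_zero]
  calc ∫ s in (0 : ℝ)..t, R (t - s) (f s) = ∫ u in (0 : ℝ)..t, R u (f (t - u)) := by
        simpa using intervalIntegral.integral_comp_sub_left (a := 0) (b := t)
          (fun u ↦ R u (f (t - u))) t
    _ = causalConvolution R ((Ici 0).indicator f) t := by
        simp only [causalConvolution, hind, setIntegral_indicator measurableSet_Iic,
          Ioi_inter_Iic, intervalIntegral.integral_of_le ht]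

theorem norm_causalConvolution_le (hRint : IntegrableOn (fun u ↦ ‖R u‖) (Ioi 0)) {C : ℝ}
    (hfC : ∀ x, ‖f x‖ ≤ C) (t : ℝ) :
    ‖causalConvolution R f t‖ ≤ (∫ u in Ioi 0, ‖R u‖) * C := by
  rw [← integral_mul_const]
  exact norm_integral_le_of_norm_le (hRint.mul_const C)
    (Eventually.of_forall fun u ↦ (R u).le_opNorm_of_le (hfC _))

theorem continuous_causalConvolution [CompleteSpace E]
    (hR : ∀ x, ContinuousOn (fun t ↦ R t x) (Ioi 0))
    (hRint : IntegrableOn (fun u ↦ ‖R u‖) (Ioi 0)) (hfc : ∀ x ≠ 0, ContinuousAt f x) {C : ℝ}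
    (hfC : ∀ x, ‖f x‖ ≤ C) : Continuous (causalConvolution R f) := by
  refine continuous_iff_continuousAt.2 fun t₀ ↦ continuousAt_of_dominated
    (Eventually.of_forall (aestronglyMeasurable_clm_apply_sub hR hfc))
    (Eventually.of_forall fun t ↦ Eventually.of_forall fun u ↦ (R u).le_opNorm_of_le (hfC _))
    (hRint.mul_const C) ?_
  filter_upwards [ae_restrict_of_ae ((countable_singleton t₀).ae_notMem volume)] with u hu
  exact (R u).continuous.continuousAt.comp
    ((hfc _ (sub_ne_zero.2 (Ne.symm hu))).comp (f := fun t ↦ t - u)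
      (continuous_sub_right u).continuousAt)

variable {g ρ : ℝ → ℝ}

theorem ofReal_norm_causalConvolution_mul_le (hf0 : ∀ x < 0, f x = 0)
    (hg0 : ∀ s ≥ 0, 0 ≤ g s) (hgρ : ∀ s t, 0 ≤ s → s ≤ t → ρ t ≤ g s * ρ (t - s)) (t : ℝ) :
    ENNReal.ofReal (‖causalConvolution R f t‖ * ρ t) ≤
      ∫⁻ u in Ioi 0, ENNReal.ofReal (g u * ‖R u‖) * ENNReal.ofReal (‖f (t - u)‖ * ρ (t - u)) := by
  have hpt : ∀ u ∈ Ioi (0 : ℝ), ‖R u (f (t - u))‖ₑ * ENNReal.ofReal (ρ t) ≤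
      ENNReal.ofReal (g u * ‖R u‖) * ENNReal.ofReal (‖f (t - u)‖ * ρ (t - u)) := by
    intro u hu
    rcases lt_or_ge (t - u) 0 with hneg | hnonneg
    · simp [hf0 _ hneg]
    calc ‖R u (f (t - u))‖ₑ * ENNReal.ofReal (ρ t)
        ≤ ENNReal.ofReal (‖R u‖ * ‖f (t - u)‖) * ENNReal.ofReal (ρ t) := by
          rw [← ofReal_norm]
          gcongr
          exact (R u).le_opNorm _
      _ ≤ ENNReal.ofReal (‖R u‖ * ‖f (t - u)‖ * (g u * ρ (t - u))) := by
          rw [← ENNReal.ofReal_mul (by positivity)]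
          gcongr
          exact hgρ u t (le_of_lt hu) (by linarith)
      _ = ENNReal.ofReal (g u * ‖R u‖) * ENNReal.ofReal (‖f (t - u)‖ * ρ (t - u)) := by
          rw [← ENNReal.ofReal_mul (mul_nonneg (hg0 u (le_of_lt hu)) (norm_nonneg _))]
          ring_nf
  calc ENNReal.ofReal (‖causalConvolution R f t‖ * ρ t)
      = ‖causalConvolution R f t‖ₑ * ENNReal.ofReal (ρ t) := by
        rw [ENNReal.ofReal_mul (norm_nonneg _), ofReal_norm]
    _ ≤ (∫⁻ u in Ioi 0, ‖R u (f (t - u))‖ₑ) * ENNReal.ofReal (ρ t) := by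
        gcongr
        exact enorm_integral_le_lintegral_enorm _
    _ = ∫⁻ u in Ioi 0, ‖R u (f (t - u))‖ₑ * ENNReal.ofReal (ρ t) :=
        (lintegral_mul_const' _ _ ENNReal.ofReal_ne_top).symm
    _ ≤ _ := setLIntegral_mono' measurableSet_Ioi hpt

theorem setIntegral_norm_causalConvolution_mul_le {T : ℝ} (hf0 : ∀ x < 0, f x = 0)
    (hg0 : ∀ s ≥ 0, 0 ≤ g s) (hgρ : ∀ s t, 0 ≤ s → s ≤ t → ρ t ≤ g s * ρ (t - s))
    (hgR : IntegrableOn (fun u ↦ g u * ‖R u‖) (Ioi 0))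
    (hfρ : IntegrableOn (fun v ↦ ‖f v‖ * ρ v) (Icc 0 T))
    (hρ : ∀ᵐ v ∂volume.restrict (Icc 0 T), 0 ≤ ρ v) :
    ∫ t in Icc 0 T, ‖causalConvolution R f t‖ * ρ t ≤
      (∫ u in Ioi 0, g u * ‖R u‖) * ∫ v in Icc 0 T, ‖f v‖ * ρ v := by
  have hgR0 : ∀ᵐ u ∂volume.restrict (Ioi 0), 0 ≤ g u * ‖R u‖ :=
    ae_restrict_of_forall_mem measurableSet_Ioi fun u hu ↦
      mul_nonneg (hg0 u (le_of_lt hu)) (norm_nonneg _)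
  have hfρ0 : ∀ᵐ v ∂volume.restrict (Icc 0 T), 0 ≤ ‖f v‖ * ρ v := by
    filter_upwards [hρ] with v hv using mul_nonneg (norm_nonneg _) hv
  have hlin : ∫⁻ t in Icc 0 T, ENNReal.ofReal (‖causalConvolution R f t‖ * ρ t) ≤
      ENNReal.ofReal (∫ u in Ioi 0, g u * ‖R u‖) *
        ENNReal.ofReal (∫ v in Icc 0 T, ‖f v‖ * ρ v) := by
    rw [ofReal_integral_eq_lintegral_ofReal hgR hgR0,
      ofReal_integral_eq_lintegral_ofReal hfρ hfρ0]
    refine (lintegral_mono fun t ↦ ofReal_norm_causalConvolution_mul_le hf0 hg0 hgρ t).trans ?_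
    exact setLIntegral_Icc_lintegral_Ioi_mul_sub_le hgR.aemeasurable.ennreal_ofReal
      hfρ.aemeasurable.ennreal_ofReal fun x hx ↦ by simp [hf0 x hx]
  calc ∫ t in Icc 0 T, ‖causalConvolution R f t‖ * ρ t
      ≤ (∫⁻ t in Icc 0 T, ENNReal.ofReal (‖causalConvolution R f t‖ * ρ t)).toReal :=
        integral_le_toReal_lintegral_ofReal _
    _ ≤ (ENNReal.ofReal (∫ u in Ioi 0, g u * ‖R u‖) *
          ENNReal.ofReal (∫ v in Icc 0 T, ‖f v‖ * ρ v)).toReal :=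
        ENNReal.toReal_mono (by finiteness) hlin
    _ = (∫ u in Ioi 0, g u * ‖R u‖) * ∫ v in Icc 0 T, ‖f v‖ * ρ v := by
        rw [ENNReal.toReal_mul, ENNReal.toReal_ofReal (integral_nonneg_of_ae hgR0),
          ENNReal.toReal_ofReal (integral_nonneg_of_ae hfρ0)]

theorem isBigO_intervalIntegral_norm_causalConvolution_indicator_mul {f : ℝ → E}
    (hfc : ContinuousOn f (Ici 0)) (hρ : ∀ T, IntegrableOn ρ (Icc 0 T))
    (hρ0 : ∀ᵐ t ∂volume.restrict (Ici 0), 0 ≤ ρ t) (hg0 : ∀ s ≥ 0, 0 ≤ g s)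
    (hgρ : ∀ s t, 0 ≤ s → s ≤ t → ρ t ≤ g s * ρ (t - s))
    (hgR : IntegrableOn (fun u ↦ g u * ‖R u‖) (Ioi 0)) :
    (fun T ↦ ∫ t in (0 : ℝ)..T, ‖causalConvolution R ((Ici 0).indicator f) t‖ * ρ t) =O[atTop]
      fun T ↦ ∫ t in (0 : ℝ)..T, ‖f t‖ * ρ t := by
  have hf₀f : EqOn ((Ici 0).indicator f) f (Ici 0) := fun x hx ↦ indicator_of_mem hx f
  refine Asymptotics.IsBigO.of_bound (∫ u in Ioi 0, g u * ‖R u‖) ?_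
  filter_upwards [eventually_ge_atTop 0] with T hT
  have hρT : ∀ᵐ t ∂volume.restrict (Icc 0 T), 0 ≤ ρ t :=
    ae_restrict_of_ae_restrict_of_subset Icc_subset_Ici_self hρ0
  have hJ : ∫ t in Icc 0 T, ‖f t‖ * ρ t = ∫ t in Icc 0 T, ‖(Ici 0).indicator f t‖ * ρ t :=
    setIntegral_congr_fun measurableSet_Icc fun t ht ↦ by rw [hf₀f ht.1]
  simp only [intervalIntegral.integral_of_le hT, ← integral_Icc_eq_integral_Ioc, hJ]
  rw [Real.norm_of_nonneg (integral_nonneg_of_ae <| by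
      filter_upwards [hρT] with t ht using mul_nonneg (norm_nonneg _) ht),
    Real.norm_of_nonneg (integral_nonneg_of_ae <| by
      filter_upwards [hρT] with t ht using mul_nonneg (norm_nonneg _) ht)]
  exact setIntegral_norm_causalConvolution_mul_le
    (fun x hx ↦ indicator_of_notMem (not_le.2 hx) f) hg0 hgρ hgR
    ((hρ T).continuousOn_mul ((hfc.congr hf₀f).mono Icc_subset_Ici_self).norm isCompact_Icc) hρT

end CausalConvolution

theorem finite_convolution_PAP0_half_general
    {X : Type*} [NormedAddCommGroup X] [NormedSpace ℂ X] [CompleteSpace X]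
    (ρ₁ ρ₂ : ℝ → ℝ) (hρ₂ : IsWeightUInftyHalf ρ₂)
    (g : ℝ → ℝ) (hgmeas : Measurable g) (hgnonneg : ∀ s ≥ (0:ℝ), 0 ≤ g s)
    (hgρ : ∀ s t : ℝ, 0 ≤ s → s ≤ t → ρ₂ t ≤ g s * ρ₂ (t - s))
    (R : ℝ → X →L[ℂ] X)
    (hRcont : ∀ x : X, ContinuousOn (fun t : ℝ => R t x) (Set.Ioi 0))
    (hR : IntegrableOn (fun s : ℝ => (1 + g s) * ‖R s‖) (Set.Ioi 0) volume)
    (f : ℝ → X) (hf : MemPAP0Half ρ₁ ρ₂ f)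
    (F : ℝ → X) (hF : ∀ t : ℝ, F t = ∫ s in (0:ℝ)..t, R (t - s) (f s)) :
    MemPAP0Half ρ₁ ρ₂ F := by
  obtain ⟨hfc, ⟨C, hC⟩, hflim⟩ := hf
  have hFf₀ : EqOn F (causalConvolution R ((Ici 0).indicator f)) (Ici 0) := fun t ht ↦
    (hF t).trans (intervalIntegral_eq_causalConvolution_indicator R f ht)
  have hf₀c : ∀ x ≠ 0, ContinuousAt ((Ici 0).indicator f) x := fun x hx ↦
    (hfc.mono interior_subset).continuousAt_indicator (by simpa using hx)
  obtain ⟨hRint, hgRint⟩ := Integrable.and_mul_of_one_add_mul hR hgmeas.aemeasurable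
    (ae_restrict_of_forall_mem measurableSet_Ioi fun s hs ↦ hgnonneg s (le_of_lt hs))
    fun s ↦ norm_nonneg (R s)
  have hf₀C := norm_indicator_Ici_le hC
  refine ⟨(continuous_causalConvolution hRcont hRint hf₀c hf₀C).continuousOn.congr hFf₀,
    ⟨_, fun t ht ↦ hFf₀ ht ▸ norm_causalConvolution_le hRint hf₀C t⟩, ?_⟩
  have hbigO := isBigO_intervalIntegral_norm_causalConvolution_indicator_mul hfc
    (fun T ↦ (integrableOn_Icc_iff_integrableOn_Ioc).2 (hρ₂.1 0 T).1)
    (hρ₂.2.1.mono fun _ h ↦ h.le) hgnonneg hgρ hgRint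
  refine ((Asymptotics.isBigO_refl _ atTop).mul (hbigO.congr' ?_ .rfl)).trans_tendsto hflim
  filter_upwards [eventually_ge_atTop 0] with T hT
  exact intervalIntegral.integral_congr fun t ht ↦ by rw [hFf₀ (uIcc_of_le hT ▸ ht).1]

/-- If `ρ₂(t) ≤ g(s) ρ₂(t-s)` for `0 ≤ s ≤ t`, and `(R(t))_{t>0}` is a
strongly continuous operator family with `∫_0^∞ (1+g(s))‖R(s)‖ ds < ∞`, then for every
`f ∈ PAP_0([0,∞), X, ρ₁, ρ₂)` the finite convolution `F(t) := ∫_0^t R(t-s) f(s) ds`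
belongs to `PAP_0([0,∞), X, ρ₁, ρ₂)`. -/
theorem finite_convolution_PAP0_half
    {X : Type*} [NormedAddCommGroup X] [NormedSpace ℂ X] [CompleteSpace X]
    (ρ₁ ρ₂ : ℝ → ℝ) (hρ₁ : IsWeightUInftyHalf ρ₁) (hρ₂ : IsWeightUInftyHalf ρ₂)
    (g : ℝ → ℝ) (hgmeas : Measurable g) (hgnonneg : ∀ s ≥ (0:ℝ), 0 ≤ g s)
    (hgρ : ∀ s t : ℝ, 0 ≤ s → s ≤ t → ρ₂ t ≤ g s * ρ₂ (t - s))
    (R : ℝ → X →L[ℂ] X)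
    (hRcont : ∀ x : X, ContinuousOn (fun t : ℝ => R t x) (Set.Ioi 0))
    (hR : IntegrableOn (fun s : ℝ => (1 + g s) * ‖R s‖) (Set.Ioi 0) volume)
    (f : ℝ → X) (hf : MemPAP0Half ρ₁ ρ₂ f)
    (F : ℝ → X) (hF : ∀ t : ℝ, F t = ∫ s in (0:ℝ)..t, R (t - s) (f s)) :
    MemPAP0Half ρ₁ ρ₂ F :=
  finite_convolution_PAP0_half_general ρ₁ ρ₂ hρ₂ g hgmeas hgnonneg hgρ R hRcont hR f hf F hF
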